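/- For α ∈ (0,1], λ ∈ [0,1], τ > 0, and β > 0, the GMOL density integrates to one: ∫₀^∞ τ β^τ (β+x)^{-(τ+1)} · [(1-α)(1-λ) G(x)² + 2 α (1-λ) G(x) + α λ] / (α + (1-α) G(x))² dx = 1, where G(x) = 1 - (β/(β+x))^τ. -/

import Mathlib

/-!
The GMOL distribution function is `F = φ ∘ G`, where `G` is the Lomax distribution function and
`φ u = ((1 - λ) u + λ) u / (α + (1 - α) u)`; the GMOL density is exactly `F' = G' · φ'(G)`.
Since `F` increases from `φ (G 0) = φ 0 = 0` to `φ 1 = 1`, the improper fundamental theorem of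
calculus gives total mass `1`.
-/

open MeasureTheory Filter Set Topology

theorem integral_Ioi_mul_deriv_comp {G g φ φ' : ℝ → ℝ} {a L : ℝ}
    (hG : ∀ x ∈ Ici a, HasDerivAt G (g x) x)
    (hφ : ∀ x ∈ Ici a, HasDerivAt φ (φ' (G x)) (G x))
    (hGL : Tendsto G atTop (𝓝 L)) (hφL : ContinuousAt φ L)
    (hnonneg : ∀ x ∈ Ioi a, 0 ≤ g x * φ' (G x)) :
    ∫ x in Ioi a, g x * φ' (G x) = φ L - φ (G a) :=
  integral_Ioi_of_hasDerivAt_of_nonneg'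
    (fun x hx => by simpa only [mul_comm] using (hφ x hx).comp x (hG x hx))
    hnonneg (hφL.tendsto.comp hGL)

noncomputable section Lomax

variable {τ β : ℝ}

def lomaxCDF (τ β x : ℝ) : ℝ := 1 - (β / (β + x)) ^ τ

def lomaxPDF (τ β x : ℝ) : ℝ := τ * β ^ τ * (β + x) ^ (-(τ + 1))

theorem lomaxCDF_zero (hβ : β ≠ 0) : lomaxCDF τ β 0 = 0 := by
  simp [lomaxCDF, hβ]

theorem lomaxCDF_nonneg (hτ : 0 ≤ τ) (hβ : 0 < β) {x : ℝ} (hx : 0 ≤ x) :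
    0 ≤ lomaxCDF τ β x := by
  have hratio : β / (β + x) ≤ 1 := (div_le_one (by linarith)).2 (by linarith)
  have := Real.rpow_le_one (by positivity) hratio hτ
  unfold lomaxCDF
  linarith

theorem lomaxPDF_nonneg (hτ : 0 ≤ τ) (hβ : 0 < β) {x : ℝ} (hx : 0 ≤ x) :
    0 ≤ lomaxPDF τ β x := by
  unfold lomaxPDF
  positivity

theorem hasDerivAt_lomaxCDF (hβ : 0 ≤ β) {x : ℝ} (hx : 0 < β + x) :
    HasDerivAt (lomaxCDF τ β) (lomaxPDF τ β x) x := by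
  have hpow : HasDerivAt (fun y => 1 - β ^ τ * (β + y) ^ (-τ)) (lomaxPDF τ β x) x := by
    refine ((((hasDerivAt_id x).const_add β).rpow_const (p := -τ) (Or.inl hx.ne')).const_mul
      (β ^ τ) |>.const_sub 1).congr_deriv ?_
    rw [lomaxPDF, show -(τ + 1) = -τ - 1 by ring, id]
    ring
  have hnear : ∀ᶠ y in 𝓝 x, 0 < β + y :=
    (continuous_const.add continuous_id).continuousAt.eventually (lt_mem_nhds hx)
  refine hpow.congr_of_eventuallyEq ?_
  filter_upwards [hnear] with y hy
  rw [lomaxCDF, Real.div_rpow hβ hy.le, Real.rpow_neg hy.le, div_eq_mul_inv]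

theorem tendsto_lomaxCDF_atTop (hτ : 0 < τ) : Tendsto (lomaxCDF τ β) atTop (𝓝 1) := by
  have hratio : Tendsto (fun x => β / (β + x)) atTop (𝓝 0) :=
    tendsto_const_nhds.div_atTop (tendsto_atTop_add_const_left _ β tendsto_id)
  have h := ((Real.continuousAt_rpow_const 0 τ (Or.inr hτ.le)).tendsto.comp hratio).const_sub 1
  rw [Function.comp_def, Real.zero_rpow hτ.ne', sub_zero] at h
  exact h

end Lomax

noncomputable section Transform

variable {α lam : ℝ}

def gmoTransform (α lam u : ℝ) : ℝ := ((1 - lam) * u + lam) * u / (α + (1 - α) * u)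

def gmoTransformDeriv (α lam u : ℝ) : ℝ :=
  ((1 - α) * (1 - lam) * u ^ 2 + 2 * α * (1 - lam) * u + α * lam) / (α + (1 - α) * u) ^ 2

theorem gmoTransform_zero : gmoTransform α lam 0 = 0 := by
  simp [gmoTransform]

theorem gmoTransform_one : gmoTransform α lam 1 = 1 := by
  simp [gmoTransform]

theorem hasDerivAt_gmoTransform {u : ℝ} (hu : α + (1 - α) * u ≠ 0) :
    HasDerivAt (gmoTransform α lam) (gmoTransformDeriv α lam u) u := by
  refine ((((hasDerivAt_id u).const_mul (1 - lam)).add_const lam).mul (hasDerivAt_id u)).div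
    (((hasDerivAt_id u).const_mul (1 - α)).const_add α) hu |>.congr_deriv ?_
  simp only [gmoTransformDeriv, Pi.mul_apply, id]
  congr 1
  ring

theorem gmoTransformDeriv_nonneg (hα : α ∈ Icc (0 : ℝ) 1) (hlam : lam ∈ Icc (0 : ℝ) 1)
    {u : ℝ} (hu : 0 ≤ u) : 0 ≤ gmoTransformDeriv α lam u := by
  obtain ⟨hα0, hα1⟩ := hα
  obtain ⟨hlam0, hlam1⟩ := hlam
  have hα' : 0 ≤ 1 - α := by linarith
  have hlam' : 0 ≤ 1 - lam := by linarith
  unfold gmoTransformDeriv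
  positivity

theorem gmoTransform_denom_pos (hα : α ∈ Ioc (0 : ℝ) 1) {u : ℝ} (hu : 0 ≤ u) :
    0 < α + (1 - α) * u := by
  have : 0 ≤ (1 - α) * u := mul_nonneg (by linarith [hα.2]) hu
  linarith [hα.1]

end Transform

/-- For α ∈ (0,1], λ ∈ [0,1], τ > 0, β > 0, the GMOL density integrates to one. -/
theorem gmol_pdf_integral_eq_one (α lam τ β : ℝ) (hα : α ∈ Set.Ioc (0 : ℝ) 1)
    (hlam : lam ∈ Set.Icc (0 : ℝ) 1) (hτ : 0 < τ) (hβ : 0 < β) :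
    ∫ x in Set.Ioi (0 : ℝ),
      τ * β ^ τ * (β + x) ^ (-(τ + 1)) *
        (((1 - α) * (1 - lam) * (1 - (β / (β + x)) ^ τ) ^ 2 +
            2 * α * (1 - lam) * (1 - (β / (β + x)) ^ τ) + α * lam) /
          (α + (1 - α) * (1 - (β / (β + x)) ^ τ)) ^ 2) = 1 := by
  change ∫ x in Ioi 0, lomaxPDF τ β x * gmoTransformDeriv α lam (lomaxCDF τ β x) = 1
  have hG_nonneg : ∀ x ∈ Ici (0 : ℝ), 0 ≤ lomaxCDF τ β x := fun x hx =>
    lomaxCDF_nonneg hτ.le hβ hx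
  have hdensity_nonneg : ∀ x ∈ Ioi (0 : ℝ),
      0 ≤ lomaxPDF τ β x * gmoTransformDeriv α lam (lomaxCDF τ β x) := fun x hx =>
    mul_nonneg (lomaxPDF_nonneg hτ.le hβ hx.le) <|
      gmoTransformDeriv_nonneg (Ioc_subset_Icc_self hα) hlam (hG_nonneg x (mem_Ici.2 hx.le))
  rw [integral_Ioi_mul_deriv_comp (L := 1)
      (fun x hx => hasDerivAt_lomaxCDF hβ.le (by linarith [mem_Ici.1 hx]))
      (fun x hx => hasDerivAt_gmoTransform (gmoTransform_denom_pos hα (hG_nonneg x hx)).ne')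
      (tendsto_lomaxCDF_atTop hτ) (hasDerivAt_gmoTransform (by simp)).continuousAt
      hdensity_nonneg,
    lomaxCDF_zero hβ.ne', gmoTransform_zero, gmoTransform_one, sub_zero]
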